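/- Comparison of Lane–Emden densities: let N ≥ 1, let 1 ≤ q < 2 and let Ω₁ ⊆ Ω₂ ⊆ ℝ^N be bounded open sets. If w₁ is an extended classical Lane–Emden solution on Ω₁ and w₂ is an extended classical Lane–Emden solution on Ω₂, then w₁(x) ≤ w₂(x) for every x ∈ ℝ^N. -/

import Mathlib

/-!
Put `α = (2 - q) / 2` and `u = w ^ α`. Where `w > 0`, the equation `-Δw = w ^ (q - 1)` becomes
`α u Δu = -α² + (α - 1) |∇u|²`, in which `w` no longer appears. If `w₁ > w₂` somewhere, then
`u₁ - u₂` has compact support and attains a positive maximum at some `x₀ ∈ Ω₁`. There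
`∇u₁ = ∇u₂`, so `u₁ Δu₁ = u₂ Δu₂ < 0`, and `u₁ > u₂` forces `Δu₁ > Δu₂`, contradicting
`Δ(u₁ - u₂)(x₀) ≤ 0`.
-/

open MeasureTheory

/-- The Laplacian of a function on `ℝ^N`, computed as the sum of the second
partial derivatives along the coordinate directions. -/
noncomputable def lap {N : ℕ} (f : EuclideanSpace ℝ (Fin N) → ℝ)
    (x : EuclideanSpace ℝ (Fin N)) : ℝ :=
  ∑ i : Fin N, fderiv ℝ (fun y => fderiv ℝ f y (EuclideanSpace.single i 1)) x
    (EuclideanSpace.single i 1)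

/-- An extended classical Lane–Emden solution on `Ω ⊆ ℝ^N`: a Lipschitz function
`w : ℝ^N → ℝ` vanishing identically outside `Ω`, positive and twice continuously
differentiable on `Ω`, satisfying `-Δw = w^(q-1)` on `Ω`. -/
def IsExtLaneEmdenSolution {N : ℕ} (q : ℝ) (Ω : Set (EuclideanSpace ℝ (Fin N)))
    (w : EuclideanSpace ℝ (Fin N) → ℝ) : Prop :=
  (∃ K : NNReal, LipschitzWith K w) ∧ (∀ x ∉ Ω, w x = 0) ∧
    (∀ x ∈ Ω, 0 < w x) ∧ ContDiffOn ℝ 2 w Ω ∧ ∀ x ∈ Ω, -lap w x = w x ^ (q - 1)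

open Filter Topology

/-- If `f'' a > 0`, the second-derivative test makes `a` a local minimum as well, so `f` is
locally constant and `f'' a = 0`. -/
theorem IsLocalMax.deriv_deriv_nonpos {f : ℝ → ℝ} {a : ℝ} (hmax : IsLocalMax f a)
    (hf : ContinuousAt f a) : deriv (deriv f) a ≤ 0 := by
  by_contra! hpos
  have hmin : IsLocalMin f a := isLocalMin_of_deriv_deriv_pos hpos hmax.deriv_eq_zero hf
  have hconst : f =ᶠ[𝓝 a] fun _ => f a :=
    (hmax.and hmin).mono fun _ hy => le_antisymm hy.1 hy.2
  rw [hconst.deriv.deriv_eq] at hpos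
  simp at hpos

section SecondDirectionalDerivative

variable {E : Type*} [NormedAddCommGroup E] [NormedSpace ℝ E]

theorem ContDiffAt.eventually_differentiableAt {f : E → ℝ} {x : E} (hf : ContDiffAt ℝ 2 f x) :
    ∀ᶠ y in 𝓝 x, DifferentiableAt ℝ f y :=
  (hf.eventually (by simp)).mono fun _ hy => hy.differentiableAt two_ne_zero

theorem ContDiffAt.differentiableAt_fderiv_apply {f : E → ℝ} {x : E} (hf : ContDiffAt ℝ 2 f x)
    (v : E) : DifferentiableAt ℝ (fun y => fderiv ℝ f y v) x :=
  ((hf.fderiv_right (m := 1) (by norm_num)).clm_apply contDiffAt_const).differentiableAt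
    one_ne_zero

theorem fderiv_comp_apply_eq_deriv_mul {f : ℝ → ℝ} {w : E → ℝ} {x : E}
    (hf : DifferentiableAt ℝ f (w x)) (hw : DifferentiableAt ℝ w x) (v : E) :
    fderiv ℝ (fun y => f (w y)) x v = deriv f (w x) * fderiv ℝ w x v := by
  have h : HasFDerivAt (fun y => f (w y)) (deriv f (w x) • fderiv ℝ w x) x :=
    hf.hasDerivAt.comp_hasFDerivAt x hw.hasFDerivAt
  simp [h.fderiv]

theorem IsLocalMax.fderiv_fderiv_apply_nonpos {f : E → ℝ} {x : E} (hmax : IsLocalMax f x)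
    (hf : ContDiffAt ℝ 2 f x) (v : E) :
    fderiv ℝ (fun y => fderiv ℝ f y v) x v ≤ 0 := by
  set ℓ : ℝ → E := fun t => x + t • v
  have hℓ : ∀ t, HasDerivAt ℓ v t := fun t => by
    simpa only [one_smul] using ((hasDerivAt_id' t).smul_const v).const_add x
  have hℓ0 : ℓ 0 = x := by simp [ℓ]
  have hℓx : Tendsto ℓ (𝓝 0) (𝓝 x) := hℓ0 ▸ (hℓ 0).continuousAt.tendsto
  have hderiv : deriv (f ∘ ℓ) =ᶠ[𝓝 0] fun t => fderiv ℝ f (ℓ t) v :=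
    (hℓx.eventually hf.eventually_differentiableAt).mono fun t ht =>
      (ht.hasFDerivAt.comp_hasDerivAt t (hℓ t)).deriv
  have hsecond : HasDerivAt (fun t => fderiv ℝ f (ℓ t) v)
      (fderiv ℝ (fun y => fderiv ℝ f y v) x v) 0 :=
    (hf.differentiableAt_fderiv_apply v).hasFDerivAt.comp_hasDerivAt_of_eq 0 (hℓ 0) hℓ0.symm
  calc fderiv ℝ (fun y => fderiv ℝ f y v) x v = deriv (deriv (f ∘ ℓ)) 0 := by
        rw [hderiv.deriv_eq, hsecond.deriv]
    _ ≤ 0 := by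
      refine IsLocalMax.deriv_deriv_nonpos ?_ ?_
      · exact (hℓ0 ▸ hmax).comp_continuous (hℓ 0).continuousAt
      · exact (hℓ0 ▸ hf.continuousAt).comp (hℓ 0).continuousAt

theorem fderiv_fderiv_apply_sub {f g : E → ℝ} {x : E} (hf : ContDiffAt ℝ 2 f x)
    (hg : ContDiffAt ℝ 2 g x) (v : E) :
    fderiv ℝ (fun y => fderiv ℝ (f - g) y v) x v =
      fderiv ℝ (fun y => fderiv ℝ f y v) x v - fderiv ℝ (fun y => fderiv ℝ g y v) x v := by
  have h : (fun y => fderiv ℝ (f - g) y v) =ᶠ[𝓝 x]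
      (fun y => fderiv ℝ f y v) - (fun y => fderiv ℝ g y v) :=
    (hf.eventually_differentiableAt.and hg.eventually_differentiableAt).mono fun y hy => by
      simp [fderiv_sub hy.1 hy.2]
  rw [h.fderiv_eq, fderiv_sub (hf.differentiableAt_fderiv_apply v)
    (hg.differentiableAt_fderiv_apply v)]
  rfl

theorem fderiv_fderiv_apply_comp {f : ℝ → ℝ} {w : E → ℝ} {x : E} (hf : ContDiffAt ℝ 2 f (w x))
    (hw : ContDiffAt ℝ 2 w x) (v : E) :
    fderiv ℝ (fun y => fderiv ℝ (fun z => f (w z)) y v) x v =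
      deriv f (w x) * fderiv ℝ (fun y => fderiv ℝ w y v) x v +
        deriv (deriv f) (w x) * fderiv ℝ w x v ^ 2 := by
  have h : (fun y => fderiv ℝ (fun z => f (w z)) y v) =ᶠ[𝓝 x]
      fun y => deriv f (w y) * fderiv ℝ w y v :=
    ((hw.continuousAt.eventually hf.eventually_differentiableAt).and
      hw.eventually_differentiableAt).mono fun y hy =>
      fderiv_comp_apply_eq_deriv_mul hy.1 hy.2 v
  have hf' : DifferentiableAt ℝ (deriv f) (w x) := hf.differentiableAt_fderiv_apply 1
  have hw' : DifferentiableAt ℝ w x := hw.differentiableAt two_ne_zero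
  have hc : DifferentiableAt ℝ (fun y => deriv f (w y)) x := hf'.comp x hw'
  rw [h.fderiv_eq, fderiv_fun_mul hc (hw.differentiableAt_fderiv_apply v)]
  simp only [add_apply, smul_apply, smul_eq_mul, fderiv_comp_apply_eq_deriv_mul hf' hw']
  ring

end SecondDirectionalDerivative

section Laplacian

variable {N : ℕ}

theorem lap_sub {f g : EuclideanSpace ℝ (Fin N) → ℝ} {x : EuclideanSpace ℝ (Fin N)}
    (hf : ContDiffAt ℝ 2 f x) (hg : ContDiffAt ℝ 2 g x) : lap (f - g) x = lap f x - lap g x := by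
  simp only [lap, fderiv_fderiv_apply_sub hf hg, Finset.sum_sub_distrib]

theorem lap_comp {f : ℝ → ℝ} {w : EuclideanSpace ℝ (Fin N) → ℝ} {x : EuclideanSpace ℝ (Fin N)}
    (hf : ContDiffAt ℝ 2 f (w x)) (hw : ContDiffAt ℝ 2 w x) :
    lap (fun y => f (w y)) x =
      deriv f (w x) * lap w x +
        deriv (deriv f) (w x) * ∑ i, fderiv ℝ w x (EuclideanSpace.single i 1) ^ 2 := by
  simp only [lap, fderiv_fderiv_apply_comp hf hw, Finset.sum_add_distrib, Finset.mul_sum]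

theorem IsLocalMax.lap_nonpos {f : EuclideanSpace ℝ (Fin N) → ℝ} {x : EuclideanSpace ℝ (Fin N)}
    (hmax : IsLocalMax f x) (hf : ContDiffAt ℝ 2 f x) : lap f x ≤ 0 :=
  Finset.sum_nonpos fun _ _ => hmax.fderiv_fderiv_apply_nonpos hf _

end Laplacian

theorem deriv_deriv_rpow_const {p s : ℝ} (hs : s ≠ 0) :
    deriv (deriv fun s : ℝ => s ^ p) s = p * ((p - 1) * s ^ (p - 2)) := by
  rw [Real.deriv_rpow_const', deriv_const_mul _ (Real.differentiableAt_rpow_const_of_ne _ hs),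
    Real.deriv_rpow_const]
  norm_num [sub_sub]

theorem lap_rpow_of_laneEmden {N : ℕ} {q α : ℝ} (hαq : 2 * α + q = 2)
    {w : EuclideanSpace ℝ (Fin N) → ℝ} {x : EuclideanSpace ℝ (Fin N)} (hw : ContDiffAt ℝ 2 w x)
    (hpos : 0 < w x) (hpde : -lap w x = w x ^ (q - 1)) :
    α * (w x ^ α * lap (fun y => w y ^ α) x) =
      -α ^ 2 + (α - 1) * ∑ i, fderiv ℝ (fun y => w y ^ α) x (EuclideanSpace.single i 1) ^ 2 := by
  have hpow : ContDiffAt ℝ 2 (fun s : ℝ => s ^ α) (w x) := Real.contDiffAt_rpow_const_of_ne hpos.ne'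
  have hgrad : ∀ i : Fin N, fderiv ℝ (fun y => w y ^ α) x (EuclideanSpace.single i 1) =
      α * w x ^ (α - 1) * fderiv ℝ w x (EuclideanSpace.single i 1) := fun i => by
    rw [fderiv_comp_apply_eq_deriv_mul (hpow.differentiableAt two_ne_zero)
      (hw.differentiableAt two_ne_zero), Real.deriv_rpow_const]
  rw [lap_comp hpow hw, Real.deriv_rpow_const, deriv_deriv_rpow_const hpos.ne']
  simp only [hgrad, mul_pow, ← Finset.mul_sum]
  set W := w x
  set S := ∑ i, fderiv ℝ w x (EuclideanSpace.single i 1) ^ 2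
  have e1 : W ^ α * W ^ (α - 1) * W ^ (q - 1) = 1 := by
    rw [← Real.rpow_add hpos, ← Real.rpow_add hpos, show α + (α - 1) + (q - 1) = 0 by linarith,
      Real.rpow_zero]
  have e2 : W ^ α * W ^ (α - 2) = W ^ (α - 1) * W ^ (α - 1) := by
    rw [← Real.rpow_add hpos, ← Real.rpow_add hpos]
    ring_nf
  linear_combination
    (-(α ^ 2)) * e1 + (α ^ 2 * (α - 1) * S) * e2 - α ^ 2 * W ^ α * W ^ (α - 1) * hpde

theorem rpow_le_rpow_of_isLocalMax_rpow_sub {N : ℕ} {q α : ℝ} (hα : 0 < α) (hα1 : α ≤ 1)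
    (hαq : 2 * α + q = 2) {w₁ w₂ : EuclideanSpace ℝ (Fin N) → ℝ} {x : EuclideanSpace ℝ (Fin N)}
    (hw₁ : ContDiffAt ℝ 2 w₁ x) (hw₂ : ContDiffAt ℝ 2 w₂ x) (hpos₁ : 0 < w₁ x) (hpos₂ : 0 < w₂ x)
    (hpde₁ : -lap w₁ x = w₁ x ^ (q - 1)) (hpde₂ : -lap w₂ x = w₂ x ^ (q - 1))
    (hmax : IsLocalMax (fun y => w₁ y ^ α - w₂ y ^ α) x) : w₁ x ^ α ≤ w₂ x ^ α := by
  set u₁ := fun y => w₁ y ^ α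
  set u₂ := fun y => w₂ y ^ α
  have hu₁ : ContDiffAt ℝ 2 u₁ x := hw₁.rpow_const_of_ne hpos₁.ne'
  have hu₂ : ContDiffAt ℝ 2 u₂ x := hw₂.rpow_const_of_ne hpos₂.ne'
  have hgrad : fderiv ℝ u₁ x = fderiv ℝ u₂ x := by
    have h := hmax.fderiv_eq_zero
    rwa [fderiv_fun_sub (hu₁.differentiableAt two_ne_zero) (hu₂.differentiableAt two_ne_zero),
      sub_eq_zero] at h
  have hlap : lap u₁ x ≤ lap u₂ x := by
    have h := (show IsLocalMax (u₁ - u₂) x from hmax).lap_nonpos (hu₁.sub hu₂)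
    rwa [lap_sub hu₁ hu₂, sub_nonpos] at h
  have hid₁ : α * (u₁ x * lap u₁ x) =
      -α ^ 2 + (α - 1) * ∑ i, fderiv ℝ u₁ x (EuclideanSpace.single i 1) ^ 2 :=
    lap_rpow_of_laneEmden hαq hw₁ hpos₁ hpde₁
  have hid₂ : α * (u₂ x * lap u₂ x) =
      -α ^ 2 + (α - 1) * ∑ i, fderiv ℝ u₂ x (EuclideanSpace.single i 1) ^ 2 :=
    lap_rpow_of_laneEmden hαq hw₂ hpos₂ hpde₂
  rw [hgrad] at hid₁
  set Q := ∑ i, fderiv ℝ u₂ x (EuclideanSpace.single i 1) ^ 2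
  have hv₂ : 0 < u₂ x := Real.rpow_pos_of_pos hpos₂ α
  have hneg : lap u₂ x < 0 := by
    have hQ : 0 ≤ Q := Finset.sum_nonneg fun _ _ => sq_nonneg _
    have h : α * (u₂ x * lap u₂ x) < 0 := by nlinarith
    exact neg_of_mul_neg_right (neg_of_mul_neg_right h hα.le) hv₂.le
  have heq : u₁ x * lap u₁ x = u₂ x * lap u₂ x := mul_left_cancel₀ hα.ne' (hid₁.trans hid₂.symm)
  by_contra! hlt
  change u₂ x < u₁ x at hlt
  nlinarith [mul_le_mul_of_nonneg_left hlap (hv₂.trans hlt).le,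
    mul_neg_of_pos_of_neg (sub_pos.2 hlt) hneg]

namespace IsExtLaneEmdenSolution

variable {N : ℕ} {q : ℝ} {Ω : Set (EuclideanSpace ℝ (Fin N))} {w : EuclideanSpace ℝ (Fin N) → ℝ}

theorem continuous_rpow (h : IsExtLaneEmdenSolution q Ω w) {α : ℝ} (hα : 0 ≤ α) :
    Continuous fun y => w y ^ α :=
  h.1.choose_spec.continuous.rpow_const fun _ => Or.inr hα

theorem nonneg (h : IsExtLaneEmdenSolution q Ω w) (x : EuclideanSpace ℝ (Fin N)) : 0 ≤ w x := by
  by_cases hx : x ∈ Ω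
  · exact (h.2.2.1 x hx).le
  · exact (h.2.1 x hx).ge

theorem hasCompactSupport_rpow (h : IsExtLaneEmdenSolution q Ω w) (hΩ : Bornology.IsBounded Ω)
    {α : ℝ} (hα : α ≠ 0) : HasCompactSupport fun y => w y ^ α := by
  refine HasCompactSupport.of_support_subset_isCompact hΩ.isCompact_closure fun y hy => ?_
  by_contra hy_cl
  simp [h.2.1 y fun hyΩ => hy_cl (subset_closure hyΩ), hα] at hy

end IsExtLaneEmdenSolution

theorem lane_emden_comparison {N : ℕ} {q : ℝ} (hq1 : 1 ≤ q) (hq2 : q < 2)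
    {Ω₁ Ω₂ : Set (EuclideanSpace ℝ (Fin N))} (hsub : Ω₁ ⊆ Ω₂)
    (hΩ₁o : IsOpen Ω₁) (hΩ₂b : Bornology.IsBounded Ω₂)
    {w₁ w₂ : EuclideanSpace ℝ (Fin N) → ℝ}
    (h₁ : IsExtLaneEmdenSolution q Ω₁ w₁) (h₂ : IsExtLaneEmdenSolution q Ω₂ w₂) :
    ∀ x, w₁ x ≤ w₂ x := by
  intro x
  by_contra! hx
  set α := (2 - q) / 2 with hα_def
  have hα : 0 < α := by linarith
  set g := fun y => w₁ y ^ α - w₂ y ^ α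
  obtain ⟨x₀, hx₀⟩ : ∃ x₀, ∀ y, g y ≤ g x₀ :=
    Continuous.exists_forall_ge_of_hasCompactSupport
      ((h₁.continuous_rpow hα.le).sub (h₂.continuous_rpow hα.le))
      ((h₁.hasCompactSupport_rpow (hΩ₂b.subset hsub) hα.ne').sub
        (h₂.hasCompactSupport_rpow hΩ₂b hα.ne'))
  have hw₂ := h₂.nonneg
  have hgx : 0 < g x := sub_pos.2 (Real.rpow_lt_rpow (hw₂ x) hx hα)
  obtain ⟨-, hz₁, hp₁, hC₁, hpde₁⟩ := h₁
  obtain ⟨-, -, hp₂, hC₂, hpde₂⟩ := h₂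
  have hx₀Ω₁ : x₀ ∈ Ω₁ := by
    by_contra hx₀Ω₁
    have : g x₀ ≤ 0 := by simp [g, hz₁ x₀ hx₀Ω₁, hα.ne', Real.rpow_nonneg (hw₂ x₀)]
    linarith [hx₀ x]
  have hnhds : Ω₁ ∈ 𝓝 x₀ := hΩ₁o.mem_nhds hx₀Ω₁
  have hle := rpow_le_rpow_of_isLocalMax_rpow_sub hα (by linarith) (by linarith)
    (hC₁.contDiffAt hnhds) (hC₂.contDiffAt (mem_of_superset hnhds hsub))
    (hp₁ x₀ hx₀Ω₁) (hp₂ x₀ (hsub hx₀Ω₁)) (hpde₁ x₀ hx₀Ω₁) (hpde₂ x₀ (hsub hx₀Ω₁))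
    (Eventually.of_forall hx₀)
  linarith [hx₀ x, sub_nonpos.2 hle]
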